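/- arXiv:0707.3794 — 4 statements merged into one kernel-verified Lean document; each statement's English description precedes it below -/
import Mathlib

section
/- Let G = (V,E) be a finite bi-directed graph. The Möbius parameters indexed by nonempty connected sets parametrize B(G) bijectively: if p and p′ are two binary distributions on V that both satisfy the connected set Markov property for G, and q_C(p) = q_C(p′) for every nonempty connected set C ⊆ V, then p = p′. -/
open Finset

namespace BMMI

variable {V : Type*} [Fintype V] [DecidableEq V]

/-- `Pr p A a` is the probability of the event `X_A = a|_A` under `p`. -/
def Pr (p : (V → Bool) → ℝ) (A : Finset V) (a : V → Bool) : ℝ :=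
  ∑ i ∈ Finset.univ.filter (fun i : V → Bool => ∀ v ∈ A, i v = a v), p i

/-- `p` is a binary distribution on `V`. -/
def IsDist (p : (V → Bool) → ℝ) : Prop :=
  (∀ i, 0 ≤ p i) ∧ ∑ i : V → Bool, p i = 1

/-- `Pr2 p S T a b` is the probability of the joint event `X_S = a|_S, X_T = b|_T`. -/
def Pr2 (p : (V → Bool) → ℝ) (S T : Finset V) (a b : V → Bool) : ℝ :=
  ∑ i ∈ Finset.univ.filter
      (fun i : V → Bool => (∀ v ∈ S, i v = a v) ∧ (∀ v ∈ T, i v = b v)), p i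

/-- `X_S` and `X_T` are independent under `p`. -/
def Indep (p : (V → Bool) → ℝ) (S T : Finset V) : Prop :=
  ∀ a b : V → Bool, Pr2 p S T a b = Pr p S a * Pr p T b

/-- `spo G A` consists of `A` together with all vertices adjacent to a vertex of `A`. -/
def spo (G : SimpleGraph V) [DecidableRel G.Adj] (A : Finset V) : Finset V :=
  Finset.univ.filter (fun w => w ∈ A ∨ ∃ v ∈ A, G.Adj v w)

/-- `C` is connected in `G`: every pair of vertices of `C` is joined by a walk
all of whose vertices lie in `C`. -/
def Conn (G : SimpleGraph V) (C : Finset V) : Prop :=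
  ∀ v ∈ C, ∀ w ∈ C, ∃ W : G.Walk v w, ∀ x ∈ W.support, x ∈ C

/-- The connected set Markov property for the bi-directed graph `G`. -/
def CSMP (G : SimpleGraph V) [DecidableRel G.Adj] (p : (V → Bool) → ℝ) : Prop :=
  ∀ C : Finset V, C.Nonempty → Conn G C → Indep p C (Finset.univ \ spo G C)

/-- `C` is an inclusion-maximal connected subset of `D` (a connected component of the
induced subgraph on `D`). -/
def IsMaxConnComp (G : SimpleGraph V) (D C : Finset V) : Prop :=
  C ⊆ D ∧ C.Nonempty ∧ Conn G C ∧
    ∀ C' : Finset V, C ⊆ C' → C' ⊆ D → Conn G C' → C' = C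

/-- The Möbius parameter `q_A(p) = P(X_A = 0)`. -/
def qM (p : (V → Bool) → ℝ) (A : Finset V) : ℝ := Pr p A (fun _ => false)

/- ======================= auxiliary lemmas ======================= -/

lemma conn_singleton (G : SimpleGraph V) (v : V) : Conn G {v} := by
  intro a ha b hb
  simp only [mem_singleton] at ha hb
  subst ha; subst hb
  exact ⟨SimpleGraph.Walk.nil, by simp⟩

lemma conn_insert (G : SimpleGraph V) {C : Finset V} (hC : Conn G C) {u w : V}
    (hu : u ∈ C) (huw : G.Adj u w) : Conn G (insert w C) := by
  have key : ∀ x ∈ C, ∃ W : G.Walk x w, ∀ y ∈ W.support, y ∈ insert w C := by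
    intro x hx
    obtain ⟨W, hW⟩ := hC x hx u hu
    refine ⟨W.append (SimpleGraph.Walk.cons huw SimpleGraph.Walk.nil), ?_⟩
    intro y hy
    rw [SimpleGraph.Walk.support_append] at hy
    rcases List.mem_append.1 hy with h1 | h1
    · exact mem_insert_of_mem (hW y h1)
    · simp at h1; subst h1; exact mem_insert_self _ _
  intro a ha b hb
  rcases mem_insert.1 ha with rfl | ha' <;> rcases mem_insert.1 hb with rfl | hb'
  · exact ⟨SimpleGraph.Walk.nil, by simp [mem_insert_self]⟩
  · obtain ⟨W, hW⟩ := key b hb'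
    exact ⟨W.reverse, by
      intro y hy
      rw [SimpleGraph.Walk.support_reverse] at hy
      exact hW y (List.mem_reverse.1 hy)⟩
  · exact key a ha'
  · obtain ⟨W, hW⟩ := hC a ha' b hb'
    exact ⟨W, fun y hy => mem_insert_of_mem (hW y hy)⟩

lemma exists_maxcomp (G : SimpleGraph V) {A : Finset V} (hA : A.Nonempty) :
    ∃ C : Finset V, C ⊆ A ∧ C.Nonempty ∧ Conn G C ∧
      ∀ C' : Finset V, C ⊆ C' → C' ⊆ A → Conn G C' → C' = C := by
  classical
  obtain ⟨v, hv⟩ := hA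
  have hne : (A.powerset.filter (fun C => C.Nonempty ∧ Conn G C)).Nonempty := by
    refine ⟨{v}, ?_⟩
    simp only [mem_filter, mem_powerset]
    exact ⟨singleton_subset_iff.2 hv, singleton_nonempty v, conn_singleton G v⟩
  obtain ⟨C, hC, hmax⟩ := Finset.exists_max_image _ Finset.card hne
  simp only [mem_filter, mem_powerset] at hC
  refine ⟨C, hC.1, hC.2.1, hC.2.2, ?_⟩
  intro C' h1 h2 h3
  have hC'ne : C'.Nonempty := by
    obtain ⟨x, hx⟩ := hC.2.1
    exact ⟨x, h1 hx⟩
  have hle : C'.card ≤ C.card := by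
    apply hmax
    simp only [mem_filter, mem_powerset]
    exact ⟨h2, hC'ne, h3⟩
  exact (Finset.eq_of_subset_of_card_le h1 hle).symm

lemma split_sum (p : (V → Bool) → ℝ) (R : (V → Bool) → Prop) [DecidablePred R]
    {T' T : Finset V} (hT : T' ⊆ T) (b : V → Bool) :
    ∑ i ∈ Finset.univ.filter (fun i : V → Bool => R i ∧ ∀ v ∈ T', i v = b v), p i
      = ∑ s ∈ (T \ T').powerset,
          ∑ i ∈ Finset.univ.filter (fun i : V → Bool =>
              R i ∧ ∀ v ∈ T, i v = (if v ∈ T \ T' then decide (v ∈ s) else b v)), p i := by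
  classical
  have maps : ∀ i ∈ Finset.univ.filter (fun i : V → Bool => R i ∧ ∀ v ∈ T', i v = b v),
      (T \ T').filter (fun v => i v = true) ∈ (T \ T').powerset := by
    intro i _
    exact mem_powerset.2 (filter_subset _ _)
  rw [← Finset.sum_fiberwise_of_maps_to maps p]
  refine Finset.sum_congr rfl ?_
  intro s hs
  have hs' : s ⊆ T \ T' := mem_powerset.1 hs
  refine Finset.sum_congr ?_ (fun _ _ => rfl)
  rw [Finset.filter_filter]
  apply Finset.filter_congr
  intro i _
  constructor
  · rintro ⟨⟨hR, hT'v⟩, hfil⟩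
    refine ⟨hR, ?_⟩
    intro v hv
    by_cases hvB : v ∈ T \ T'
    · rw [if_pos hvB]
      have hmem : v ∈ s ↔ (v ∈ T \ T' ∧ i v = true) := by
        rw [← hfil]; simp [mem_filter]
      cases hiv : i v
      · have : v ∉ s := fun hvs => by
          have := (hmem.1 hvs).2; rw [hiv] at this; exact Bool.false_ne_true this
        simp [this]
      · have : v ∈ s := hmem.2 ⟨hvB, hiv⟩
        simp [this]
    · rw [if_neg hvB]
      have hvT' : v ∈ T' := by
        by_contra hc
        exact hvB (mem_sdiff.2 ⟨hv, hc⟩)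
      exact hT'v v hvT'
  · rintro ⟨hR, hTv⟩
    refine ⟨⟨hR, ?_⟩, ?_⟩
    · intro v hv
      have h1 := hTv v (hT hv)
      rwa [if_neg (fun hc => (mem_sdiff.1 hc).2 hv)] at h1
    · ext v
      simp only [mem_filter]
      constructor
      · rintro ⟨hvB, hvtrue⟩
        have h1 := hTv v (mem_sdiff.1 hvB).1
        rw [if_pos hvB, hvtrue] at h1
        exact of_decide_eq_true h1.symm
      · intro hvs
        have hvB : v ∈ T \ T' := hs' hvs
        have h1 := hTv v (mem_sdiff.1 hvB).1
        rw [if_pos hvB] at h1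
        exact ⟨hvB, by rw [h1]; exact decide_eq_true hvs⟩

lemma indep_subset (p : (V → Bool) → ℝ) {S T T' : Finset V} (hT : T' ⊆ T)
    (h : Indep p S T) : Indep p S T' := by
  classical
  intro a b
  have h2 : Pr2 p S T' a b = ∑ s ∈ (T \ T').powerset,
      Pr2 p S T a (fun v => if v ∈ T \ T' then decide (v ∈ s) else b v) :=
    split_sum p (fun i => ∀ v ∈ S, i v = a v) hT b
  have h1 : Pr p T' b = ∑ s ∈ (T \ T').powerset,
      Pr p T (fun v => if v ∈ T \ T' then decide (v ∈ s) else b v) := by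
    have := split_sum p (fun _ : V → Bool => True) hT b
    simp only [true_and] at this
    unfold Pr
    exact this
  rw [h2, h1, Finset.mul_sum]
  exact Finset.sum_congr rfl fun s _ => h a _

lemma qM_empty (p : (V → Bool) → ℝ) (hp : IsDist p) : qM p ∅ = 1 := by
  rw [qM, Pr, ← hp.2]
  apply Finset.sum_congr ?_ (fun _ _ => rfl)
  simp

lemma qM_factor (p : (V → Bool) → ℝ) {A C : Finset V} (hCA : C ⊆ A)
    (hind : Indep p C (A \ C)) :
    qM p A = qM p C * qM p (A \ C) := by
  have h1 := hind (fun _ => false) (fun _ => false)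
  rw [qM, qM, qM, ← h1, Pr2, Pr]
  apply Finset.sum_congr ?_ (fun _ _ => rfl)
  apply Finset.filter_congr
  intro i _
  constructor
  · intro hi
    exact ⟨fun v hv => hi v (hCA hv), fun v hv => hi v (mem_sdiff.1 hv).1⟩
  · rintro ⟨ha, hb⟩ v hv
    by_cases hvC : v ∈ C
    · exact ha v hvC
    · exact hb v (mem_sdiff.2 ⟨hv, hvC⟩)

/-- The Möbius parameters indexed by nonempty connected sets parametrize `B(G)`
injectively: two distributions in `B(G)` with the same connected-set Möbius
parameters coincide. -/
theorem stmt3 (G : SimpleGraph V) [DecidableRel G.Adj] (p p' : (V → Bool) → ℝ)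
    (hp : IsDist p) (hp' : IsDist p') (h : CSMP G p) (h' : CSMP G p')
    (hq : ∀ C : Finset V, C.Nonempty → Conn G C → qM p C = qM p' C) :
    p = p' := by
  classical
  have hall : ∀ A : Finset V, qM p A = qM p' A := by
    intro A
    induction A using Finset.strongInduction with
    | _ A ih =>
      rcases A.eq_empty_or_nonempty with rfl | hA
      · rw [qM_empty p hp, qM_empty p' hp']
      · obtain ⟨C, hCA, hCne, hCconn, hCmax⟩ := exists_maxcomp G hA
        have hsep : A \ C ⊆ Finset.univ \ spo G C := by
          intro w hw
          rw [mem_sdiff] at hw ⊢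
          refine ⟨mem_univ w, ?_⟩
          intro hws
          rw [spo, mem_filter] at hws
          rcases hws.2 with hwc | ⟨u, hu, huw⟩
          · exact hw.2 hwc
          · have heq : insert w C = C :=
              hCmax _ (subset_insert _ _) (insert_subset hw.1 hCA)
                (conn_insert G hCconn hu huw)
            exact hw.2 (heq ▸ mem_insert_self w C)
        have hfac : qM p A = qM p C * qM p (A \ C) :=
          qM_factor p hCA (indep_subset p hsep (h C hCne hCconn))
        have hfac' : qM p' A = qM p' C * qM p' (A \ C) :=
          qM_factor p' hCA (indep_subset p' hsep (h' C hCne hCconn))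
        rw [hfac, hfac', hq C hCne hCconn, ih _ (sdiff_ssubset hCA hCne)]
  -- Möbius inversion: the values q_A for all A determine p.
  have key : ∀ n : ℕ, ∀ i : V → Bool,
      (Finset.univ.filter (fun v => i v = true)).card ≤ n → p i = p' i := by
    intro n
    induction n using Nat.strong_induction_on with
    | _ n ihn =>
      intro i hi
      have hq0 := hall (Finset.univ.filter (fun v => i v = false))
      rw [qM, qM, Pr, Pr] at hq0
      set F := Finset.univ.filter (fun j : V → Bool =>
        ∀ v ∈ Finset.univ.filter (fun v => i v = false), j v = (fun _ : V => false) v)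
        with hF
      have hiF : i ∈ F := by
        rw [hF, mem_filter]
        exact ⟨mem_univ _, fun v hv => (mem_filter.1 hv).2⟩
      have herase : ∀ j ∈ F.erase i, p j = p' j := by
        intro j hj
        obtain ⟨hji, hjF⟩ := mem_erase.1 hj
        rw [hF, mem_filter] at hjF
        have hsub : Finset.univ.filter (fun v => j v = true)
            ⊆ Finset.univ.filter (fun v => i v = true) := by
          intro v hv
          rw [mem_filter] at hv ⊢
          refine ⟨mem_univ _, ?_⟩
          by_contra hiv
          have hif : i v = false := by
            cases hivv : i v
            · rfl
            · exact absurd hivv hiv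
          have := hjF.2 v (by rw [mem_filter]; exact ⟨mem_univ _, hif⟩)
          rw [this] at hv
          exact Bool.false_ne_true hv.2
        have hssub : Finset.univ.filter (fun v => j v = true)
            ⊂ Finset.univ.filter (fun v => i v = true) := by
          rw [Finset.ssubset_iff_subset_ne]
          refine ⟨hsub, ?_⟩
          intro heq2
          apply hji
          funext v
          have h1 : j v = true ↔ i v = true := by
            constructor
            · intro hh
              have hm : v ∈ Finset.univ.filter (fun v => j v = true) :=
                mem_filter.2 ⟨mem_univ v, hh⟩
              rw [heq2] at hm
              exact (mem_filter.1 hm).2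
            · intro hh
              have hm : v ∈ Finset.univ.filter (fun v => i v = true) :=
                mem_filter.2 ⟨mem_univ v, hh⟩
              rw [← heq2] at hm
              exact (mem_filter.1 hm).2
          cases hjv : j v <;> cases hiv : i v <;> simp [hjv, hiv] at h1 ⊢
        exact ihn _ (lt_of_lt_of_le (Finset.card_lt_card hssub) hi) j le_rfl
      have hsp := Finset.add_sum_erase F p hiF
      have hsp' := Finset.add_sum_erase F p' hiF
      have hes : ∑ j ∈ F.erase i, p j = ∑ j ∈ F.erase i, p' j :=
        Finset.sum_congr rfl herase
      have : p i + ∑ j ∈ F.erase i, p j = p' i + ∑ j ∈ F.erase i, p' j := by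
        rw [hsp, hsp']; exact hq0
      rw [hes] at this
      linarith
  funext i
  exact key _ i le_rfl

end BMMI
end

section
/- Let G = (V,E) be a finite bi-directed graph and let S be a group of permutations of V that leaves G invariant (every σ ∈ S is a graph automorphism of G). Let p be a binary distribution on V satisfying the connected set Markov property for G. Then p lies in the symmetry model B(S) — i.e., p_i = p_{σ(i)} for all σ ∈ S and all cells i ∈ {0,1}^V, where σ(i) = (i_{σ(v)})_{v∈V} — if and only if the Möbius parameters of p satisfy q_C(p) = q_{σ(C)}(p) for every connected set C ⊆ V and every σ ∈ S. -/
/-! Both sides are equivalent to invariance of every Möbius parameter `q_A`, `A ⊆ V`. Indeed,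
relabelling the cells by `σ` turns `q_A` into `q_{σ A}`, and the `q_A` determine `p` by Möbius
inversion on the lattice of subsets, since `q_{Aᶜ}` is the sum of the probabilities of the cells
supported in `A`. Under the connected set Markov property, a connected component `C` of `A`
satisfies `A ∖ C ∩ spo(C) = ∅`, so `q_A = q_C · q_{A∖C}`; an automorphism carries this
factorisation to the one of `σ A`, and invariance spreads from connected sets to all sets by
induction on `A`. -/

open Finset

namespace BMMI

variable {V : Type*}

section Probability

variable [Fintype V] [DecidableEq V] (p : (V → Bool) → ℝ)

lemma Pr2_empty_left (T : Finset V) (a b : V → Bool) : Pr2 p ∅ T a b = Pr p T b := by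
  simp [Pr2, Pr]

lemma Pr2_eq_sum_insert (S : Finset V) (a : V → Bool) {T : Finset V} {w : V} (hw : w ∉ T)
    (b : V → Bool) :
    Pr2 p S T a b = ∑ c : Bool, Pr2 p S (insert w T) a (Function.update b w c) := by
  unfold Pr2
  rw [← Finset.sum_fiberwise _ (fun i => i w)]
  refine Finset.sum_congr rfl fun c _ => ?_
  rw [Finset.filter_filter]
  refine Finset.sum_congr (Finset.filter_congr fun i _ => ?_) fun _ _ => rfl
  have hb : ∀ v ∈ T, Function.update b w c v = b v :=
    fun v hv => Function.update_of_ne (ne_of_mem_of_not_mem hv hw) _ _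
  simp only [Finset.forall_mem_insert, Function.update_self]
  constructor
  · rintro ⟨⟨hS, hT⟩, rfl⟩
    exact ⟨hS, rfl, fun v hv => (hT v hv).trans (hb v hv).symm⟩
  · rintro ⟨hS, hc, hT⟩
    exact ⟨⟨hS, fun v hv => (hT v hv).trans (hb v hv)⟩, hc⟩

lemma Pr_eq_sum_insert {T : Finset V} {w : V} (hw : w ∉ T) (b : V → Bool) :
    Pr p T b = ∑ c : Bool, Pr p (insert w T) (Function.update b w c) := by
  simpa only [Pr2_empty_left] using Pr2_eq_sum_insert p ∅ b hw b

variable {p}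

lemma Indep.of_insert {S T : Finset V} {w : V} (h : Indep p S (insert w T)) : Indep p S T := by
  by_cases hw : w ∈ T
  · rwa [Finset.insert_eq_of_mem hw] at h
  intro a b
  rw [Pr2_eq_sum_insert p S a hw, Pr_eq_sum_insert p hw, Finset.mul_sum]
  exact Finset.sum_congr rfl fun c _ => h a _

lemma Indep.mono_right {S T T' : Finset V} (h : Indep p S T) (hT' : T' ⊆ T) : Indep p S T' := by
  obtain ⟨D, rfl⟩ : ∃ D, T = T' ∪ D := ⟨T \ T', (Finset.union_sdiff_of_subset hT').symm⟩
  clear hT'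
  induction D using Finset.induction_on with
  | empty => simpa using h
  | insert w D _ ih => exact ih (Finset.union_insert w T' D ▸ h).of_insert

lemma qM_union_of_indep {C D : Finset V} (h : Indep p C D) :
    qM p (C ∪ D) = qM p C * qM p D := by
  rw [qM, qM, qM, ← h]
  simp only [Pr, Pr2, Finset.forall_mem_union]

end Probability

section Moebius

variable [Fintype V] [DecidableEq V]

lemma qM_eq_sum_Iic (p : (V → Bool) → ℝ) (A : Finset V) :
    qM p A = ∑ E ∈ Finset.Iic Aᶜ, p (fun v => decide (v ∈ E)) := by
  unfold qM Pr
  refine Finset.sum_nbij' (fun i => Finset.univ.filter (fun v => i v = true))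
    (fun E v => decide (v ∈ E)) ?_ ?_ ?_ ?_ ?_ <;> intro x hx <;>
    simp [Finset.subset_iff] at hx ⊢
  · exact fun v hv hvA => by simp [hx v hvA] at hv
  · exact fun v hvA hv => hx hv hvA

lemma qM_injective {p p' : (V → Bool) → ℝ} (h : ∀ A, qM p A = qM p' A) : p = p' := by
  have inversion (p : (V → Bool) → ℝ) (E : Finset V) :=
    IncidenceAlgebra.moebius_inversion_bot (fun E => p (fun v => decide (v ∈ E)))
      (fun E => qM p Eᶜ) (fun E => by rw [qM_eq_sum_Iic, compl_compl]) E
  funext i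
  obtain ⟨E, rfl⟩ : ∃ E : Finset V, (fun v => decide (v ∈ E)) = i :=
    ⟨Finset.univ.filter fun v => i v = true, by simp⟩
  rw [inversion p, inversion p']
  simp only [h]

lemma qM_comp_perm_image (p : (V → Bool) → ℝ) (σ : Equiv.Perm V) (A : Finset V) :
    qM (fun i => p (fun v => i (σ v))) (A.image σ) = qM p A := by
  unfold qM Pr
  refine Finset.sum_nbij' (fun i v => i (σ v)) (fun j v => j (σ.symm v)) ?_ ?_ ?_ ?_ ?_ <;>
    simp

theorem qM_image_eq_iff (p : (V → Bool) → ℝ) (σ : Equiv.Perm V) :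
    (∀ A, qM p A = qM p (A.image σ)) ↔ ∀ i, p i = p (fun v => i (σ v)) := by
  constructor
  · intro h
    have : (fun i => p (fun v => i (σ v))) = p := qM_injective fun B => by
      rw [show B = (B.image σ.symm).image σ by simp [Finset.image_image], qM_comp_perm_image, ← h]
    exact fun i => (congrFun this i).symm
  · intro h A
    have : p = fun i => p (fun v => i (σ v)) := funext h
    conv_rhs => rw [this]
    rw [qM_comp_perm_image]

end Moebius

section Graph

variable {G : SimpleGraph V}

section Component

variable [Fintype V]

open scoped Classical in
noncomputable def componentIn (G : SimpleGraph V) (A : Finset V) (v : V) : Finset V :=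
  Finset.univ.filter fun w => ∃ W : G.Walk v w, ∀ x ∈ W.support, x ∈ A

lemma mem_componentIn {A : Finset V} {v w : V} :
    w ∈ componentIn G A v ↔ ∃ W : G.Walk v w, ∀ x ∈ W.support, x ∈ A := by
  simp [componentIn]

lemma componentIn_subset (A : Finset V) (v : V) : componentIn G A v ⊆ A :=
  fun _ hw => (mem_componentIn.mp hw).elim fun W hW => hW _ W.end_mem_support

lemma mem_componentIn_self {A : Finset V} {v : V} (hv : v ∈ A) : v ∈ componentIn G A v :=
  mem_componentIn.mpr ⟨.nil, by simpa using hv⟩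

variable [DecidableEq V]

lemma support_subset_componentIn {A : Finset V} {v w : V} (W : G.Walk v w)
    (hW : ∀ x ∈ W.support, x ∈ A) : ∀ x ∈ W.support, x ∈ componentIn G A v :=
  fun x hx => mem_componentIn.mpr
    ⟨W.takeUntil x hx, fun y hy => hW y (W.support_takeUntil_subset_support hx hy)⟩

lemma conn_componentIn (A : Finset V) (v : V) : Conn G (componentIn G A v) := by
  intro w hw w' hw'
  obtain ⟨W, hW⟩ := mem_componentIn.mp hw
  obtain ⟨W', hW'⟩ := mem_componentIn.mp hw'
  refine ⟨W.reverse.append W', fun x hx => ?_⟩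
  rw [SimpleGraph.Walk.mem_support_append_iff, SimpleGraph.Walk.support_reverse,
    List.mem_reverse] at hx
  exact hx.elim (support_subset_componentIn W hW x) (support_subset_componentIn W' hW' x)

lemma disjoint_sdiff_componentIn_spo [DecidableRel G.Adj] (A : Finset V) (v : V) :
    Disjoint (A \ componentIn G A v) (spo G (componentIn G A v)) := by
  refine Finset.disjoint_left.mpr fun u hu hspo => (Finset.mem_sdiff.mp hu).2 ?_
  obtain hu' | ⟨c, hc, hcu⟩ := (Finset.mem_filter.mp hspo).2
  · exact hu'
  obtain ⟨W, hW⟩ := mem_componentIn.mp hc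
  refine mem_componentIn.mpr ⟨W.concat hcu, fun x hx => ?_⟩
  rw [SimpleGraph.Walk.support_concat, List.mem_append, List.mem_singleton] at hx
  exact hx.elim (hW x) fun hxu => hxu ▸ (Finset.mem_sdiff.mp hu).1

end Component

variable {W : Type*} [DecidableEq W] {G' : SimpleGraph W}

lemma Conn.image (φ : G ≃g G') {C : Finset V} (hC : Conn G C) : Conn G' (C.image φ) := by
  intro v' hv' w' hw'
  obtain ⟨v, hv, rfl⟩ := Finset.mem_image.mp hv'
  obtain ⟨w, hw, rfl⟩ := Finset.mem_image.mp hw'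
  obtain ⟨P, hP⟩ := hC v hv w hw
  refine ⟨P.map φ.toHom, fun x hx => ?_⟩
  rw [SimpleGraph.Walk.support_map, List.mem_map] at hx
  obtain ⟨y, hy, rfl⟩ := hx
  exact Finset.mem_image_of_mem _ (hP y hy)

lemma spo_image [Fintype V] [DecidableEq V] [Fintype W] [DecidableRel G.Adj] [DecidableRel G'.Adj]
    (φ : G ≃g G') (C : Finset V) :
    spo G' (C.image φ) = (spo G C).image φ := by
  ext w
  obtain ⟨u, rfl⟩ := φ.surjective w
  simp [spo, φ.injective.eq_iff, φ.map_adj_iff]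

end Graph

section Markov

variable [Fintype V] [DecidableEq V] {G : SimpleGraph V} [DecidableRel G.Adj]
  {p : (V → Bool) → ℝ}

lemma CSMP.qM_union (hM : CSMP G p) {C D : Finset V} (hC : C.Nonempty) (hCc : Conn G C)
    (hD : Disjoint D (spo G C)) : qM p (C ∪ D) = qM p C * qM p D :=
  qM_union_of_indep <|
    (hM C hC hCc).mono_right (Finset.subset_sdiff.mpr ⟨Finset.subset_univ D, hD⟩)

theorem CSMP.qM_image_eq (hM : CSMP G p) (φ : G ≃g G)
    (hq : ∀ C, Conn G C → qM p C = qM p (C.image φ)) (A : Finset V) :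
    qM p A = qM p (A.image φ) := by
  induction A using Finset.strongInduction with
  | _ A ih =>
  rcases A.eq_empty_or_nonempty with rfl | ⟨v, hv⟩
  · simp
  set C := componentIn G A v
  have hCA : C ⊆ A := componentIn_subset A v
  have hC : C.Nonempty := ⟨v, mem_componentIn_self hv⟩
  have hCc : Conn G C := conn_componentIn A v
  have hD : Disjoint (A \ C) (spo G C) := disjoint_sdiff_componentIn_spo A v
  calc qM p A = qM p (C ∪ A \ C) := by rw [Finset.union_sdiff_of_subset hCA]
    _ = qM p C * qM p (A \ C) := hM.qM_union hC hCc hD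
    _ = qM p (C.image φ) * qM p ((A \ C).image φ) := by
      rw [hq C hCc, ih _ (Finset.sdiff_ssubset hCA hC)]
    _ = qM p (C.image φ ∪ (A \ C).image φ) := by
      refine (hM.qM_union (hC.image φ) (hCc.image φ) ?_).symm
      rw [spo_image]
      exact Finset.disjoint_image φ.injective |>.mpr hD
    _ = qM p (A.image φ) := by rw [← Finset.image_union, Finset.union_sdiff_of_subset hCA]

end Markov

section

variable [Fintype V] [DecidableEq V]

theorem stmt10_general (G : SimpleGraph V) [DecidableRel G.Adj]
    (S : Subgroup (Equiv.Perm V))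
    (hS : ∀ σ ∈ S, ∀ v w : V, G.Adj v w ↔ G.Adj (σ v) (σ w))
    (p : (V → Bool) → ℝ) (hM : CSMP G p) :
    (∀ σ ∈ S, ∀ i : V → Bool, p i = p (fun v => i (σ v))) ↔
      (∀ σ ∈ S, ∀ C : Finset V, Conn G C → qM p C = qM p (C.image σ)) := by
  refine forall₂_congr fun σ hσ => ?_
  let φ : G ≃g G := { toEquiv := σ, map_rel_iff' := (hS σ hσ _ _).symm }
  rw [← qM_image_eq_iff]
  exact ⟨fun h C _ => h C, hM.qM_image_eq φ⟩

/-- Theorem (symmetry and independence): for a distribution in `B(G)` and a group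
`S` of automorphisms of `G`, invariance of the cell probabilities under `S` is
equivalent to invariance of the connected-set Möbius parameters under `S`. -/
theorem stmt10 (G : SimpleGraph V) [DecidableRel G.Adj]
    (S : Subgroup (Equiv.Perm V))
    (hS : ∀ σ ∈ S, ∀ v w : V, G.Adj v w ↔ G.Adj (σ v) (σ w))
    (p : (V → Bool) → ℝ) (hp : IsDist p) (hM : CSMP G p) :
    (∀ σ ∈ S, ∀ i : V → Bool, p i = p (fun v => i (σ v))) ↔
      (∀ σ ∈ S, ∀ C : Finset V, Conn G C → qM p C = qM p (C.image σ)) :=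
  stmt10_general G S hS p hM

end

end BMMI
end

section
/- Let G = (V,E) be a finite bi-directed graph, let p be a binary distribution on V satisfying the connected set Markov property for G, let D ⊆ V be a disconnected set, let v ∈ D, and let C be the inclusion-maximal connected subset of D containing v. Then the Möbius parameters of p satisfy q_{D∖{v}}(p) = q_{C∖{v}}(p) · q_{D∖C}(p), with the convention q_∅ = 1. -/
/-!
The component `C` of `D` containing `v` has no neighbour in `D \ C` (otherwise it could be
enlarged), so `D \ C` lies outside `spo G C` and the connected set Markov property makes
`X_C` independent of `X_{D \ C}`. Independence passes to subsets, in particular to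
`C.erase v`, and `D.erase v` is the disjoint union of `C.erase v` and `D \ C`; the Möbius
parameter of a union of two independent blocks is the product of theirs.
-/

open Finset

namespace BMMI

open Function

section Graph

variable {V : Type*} {G : SimpleGraph V}

theorem conn_of_forall_walk_to {C : Finset V} {u : V}
    (h : ∀ x ∈ C, ∃ W : G.Walk x u, ∀ y ∈ W.support, y ∈ C) : Conn G C := by
  intro x hx y hy
  obtain ⟨Wx, hWx⟩ := h x hx
  obtain ⟨Wy, hWy⟩ := h y hy
  refine ⟨Wx.append Wy.reverse, fun z hz => ?_⟩
  rw [SimpleGraph.Walk.mem_support_append_iff, SimpleGraph.Walk.support_reverse,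
    List.mem_reverse] at hz
  exact hz.elim (hWx z) (hWy z)

theorem Conn.insert_of_adj [DecidableEq V] {C : Finset V} {u w : V} (hC : Conn G C)
    (hu : u ∈ C) (hadj : G.Adj u w) : Conn G (insert w C) := by
  refine conn_of_forall_walk_to (u := u) fun x hx => ?_
  rcases mem_insert.1 hx with rfl | hx
  · exact ⟨.cons hadj.symm .nil, by simp [hu]⟩
  · obtain ⟨W, hW⟩ := hC x hx u hu
    exact ⟨W, fun y hy => mem_insert_of_mem (hW y hy)⟩

theorem IsMaxConnComp.mem_of_adj [DecidableEq V] {D C : Finset V} (hC : IsMaxConnComp G D C)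
    {u w : V} (hu : u ∈ C) (hw : w ∈ D) (hadj : G.Adj u w) : w ∈ C := by
  obtain ⟨hCD, -, hCconn, hCmax⟩ := hC
  rw [← hCmax _ (subset_insert w C) (insert_subset hw hCD) (hCconn.insert_of_adj hu hadj)]
  exact mem_insert_self w C

theorem IsMaxConnComp.sdiff_subset_compl_spo [Fintype V] [DecidableEq V] [DecidableRel G.Adj]
    {D C : Finset V} (hC : IsMaxConnComp G D C) : D \ C ⊆ univ \ spo G C := by
  intro w hw
  obtain ⟨hwD, hwC⟩ := mem_sdiff.1 hw
  simp only [spo, mem_sdiff, mem_univ, mem_filter, true_and, not_or, not_exists, not_and]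
  exact ⟨hwC, fun u hu hadj => hwC (hC.mem_of_adj hu hwD hadj)⟩

theorem forall_mem_erase_and_iff [DecidableEq V] {A : Finset V} {v : V} (hv : v ∈ A) (i a : V → Bool)
    (c : Bool) :
    ((∀ w ∈ A.erase v, i w = a w) ∧ i v = c) ↔ ∀ w ∈ A, i w = update a v c w := by
  conv_rhs => rw [← insert_erase hv]
  rw [forall_mem_insert, update_self, and_comm]
  refine and_congr_right' (forall₂_congr fun w hw => ?_)
  rw [update_of_ne (ne_of_mem_erase hw)]

end Graph

section Probability

variable {V : Type*} [Fintype V] [DecidableEq V] (p : (V → Bool) → ℝ)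

theorem sum_filter_erase_and (Q : (V → Bool) → Prop) [DecidablePred Q] {A : Finset V} {v : V}
    (hv : v ∈ A) (a : V → Bool) :
    ∑ i ∈ univ.filter (fun i => (∀ w ∈ A.erase v, i w = a w) ∧ Q i), p i =
      ∑ i ∈ univ.filter (fun i => (∀ w ∈ A, i w = update a v true w) ∧ Q i), p i +
        ∑ i ∈ univ.filter (fun i => (∀ w ∈ A, i w = update a v false w) ∧ Q i), p i := by
  rw [← sum_filter_add_sum_filter_not _ (fun i => i v = true), filter_filter, filter_filter]
  congr 2 <;> ext i <;>
    simp only [mem_filter, mem_univ, true_and, ← forall_mem_erase_and_iff hv, Bool.not_eq_true] <;>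
    tauto

theorem Pr_erase {A : Finset V} {v : V} (hv : v ∈ A) (a : V → Bool) :
    Pr p (A.erase v) a = Pr p A (update a v true) + Pr p A (update a v false) := by
  simpa only [Pr, and_true] using sum_filter_erase_and p (fun _ => True) hv a

theorem Pr2_erase_left {S : Finset V} (T : Finset V) {v : V} (hv : v ∈ S) (a b : V → Bool) :
    Pr2 p (S.erase v) T a b = Pr2 p S T (update a v true) b + Pr2 p S T (update a v false) b :=
  sum_filter_erase_and p _ hv a

theorem Pr2_comm (S T : Finset V) (a b : V → Bool) : Pr2 p S T a b = Pr2 p T S b a := by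
  simp only [Pr2, and_comm]

theorem Pr_union_eq_Pr2 (A B : Finset V) (a : V → Bool) : Pr p (A ∪ B) a = Pr2 p A B a a := by
  simp only [Pr, Pr2, mem_union, or_imp, forall_and]

variable {p}

theorem Indep.symm {S T : Finset V} (h : Indep p S T) : Indep p T S := fun a b => by
  rw [Pr2_comm, h, mul_comm]

theorem Indep.erase_left {S T : Finset V} (h : Indep p S T) (v : V) : Indep p (S.erase v) T := by
  by_cases hv : v ∈ S
  · intro a b
    rw [Pr2_erase_left p T hv, h, h, Pr_erase p hv, add_mul]
  · rwa [erase_eq_of_notMem hv]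

theorem Indep.sdiff_left {S T : Finset V} (h : Indep p S T) (R : Finset V) :
    Indep p (S \ R) T := by
  induction R using Finset.induction_on with
  | empty => rwa [sdiff_empty]
  | insert x R _ ih => rw [sdiff_insert]; exact ih.erase_left x

theorem Indep.mono_left {S S' T : Finset V} (h : Indep p S T) (hS : S' ⊆ S) : Indep p S' T := by
  simpa only [Finset.sdiff_sdiff_eq_self hS] using h.sdiff_left (S \ S')

theorem Indep.mono {S S' T T' : Finset V} (h : Indep p S T) (hS : S' ⊆ S) (hT : T' ⊆ T) :
    Indep p S' T' :=
  ((h.mono_left hS).symm.mono_left hT).symm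

theorem Indep.qM_union {S T : Finset V} (h : Indep p S T) : qM p (S ∪ T) = qM p S * qM p T := by
  rw [qM, Pr_union_eq_Pr2, h]
  rfl

end Probability

variable {V : Type*} [Fintype V] [DecidableEq V]

theorem stmt12_general (G : SimpleGraph V) [DecidableRel G.Adj] (p : (V → Bool) → ℝ)
    (h : CSMP G p) (D C : Finset V)
    (v : V) (hC : IsMaxConnComp G D C) (hvC : v ∈ C) :
    qM p (D.erase v) = qM p (C.erase v) * qM p (D \ C) := by
  have hindep : Indep p (C.erase v) (D \ C) :=
    (h C ⟨v, hvC⟩ hC.2.2.1).mono (erase_subset v C) hC.sdiff_subset_compl_spo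
  have hsplit : D.erase v = C.erase v ∪ D \ C := by
    conv_lhs => rw [← union_sdiff_of_subset hC.1]
    rw [erase_union_distrib, erase_eq_of_notMem (notMem_sdiff_of_mem_right hvC)]
  rw [hsplit, hindep.qM_union]

/-- If `p ∈ B(G)`, `D` is disconnected, `v ∈ D`, and `C` is the inclusion-maximal
connected subset of `D` containing `v`, then
`q_{D∖{v}} = q_{C∖{v}} ⋅ q_{D∖C}` (with `q_∅ = 1`). -/
theorem stmt12 (G : SimpleGraph V) [DecidableRel G.Adj] (p : (V → Bool) → ℝ)
    (hp : IsDist p) (h : CSMP G p) (D C : Finset V) (hD : ¬ Conn G D)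
    (v : V) (hv : v ∈ D) (hC : IsMaxConnComp G D C) (hvC : v ∈ C) :
    qM p (D.erase v) = qM p (C.erase v) * qM p (D \ C) :=
  stmt12_general G p h D C v hC hvC

end BMMI
end

section
/- Let G = (V,E) be a finite bi-directed graph, let C ⊆ V be a nonempty connected set, and let A ⊆ V. Then there exists a set B with A ⊆ B ⊆ V such that C is an inclusion-maximal connected subset of B (i.e. C ∈ [B]_G) if and only if spo(C) ∩ (A∖C) = ∅. (Equivalently: the variable q_C appears in the expansion p_A^V = Σ_{B : A ⊆ B ⊆ V} (−1)^{|B∖A|} ∏_{C* ∈ [B]_G} q_{C*} if and only if spo(C) ∩ (A∖C) = ∅.) -/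
/-!
A nonempty connected `C ⊆ D` is a component of `D` exactly when no vertex of `D ∖ C` is adjacent
to `C`: such a vertex could be added to `C`, and conversely any connected `C' ⊋ C` inside `D`
contains an edge leaving `C`. Hence `B ⊇ A` with component `C` exists iff `B = A ∪ C` works,
i.e. iff no vertex of `A ∖ C` lies in `spo C`.
-/

open Finset

namespace BMMI

variable {V : Type*} [Fintype V] [DecidableEq V]

lemma mem_spo {G : SimpleGraph V} [DecidableRel G.Adj] {A : Finset V} {w : V} :
    w ∈ spo G A ↔ w ∈ A ∨ ∃ v ∈ A, G.Adj v w := by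
  simp [spo]

lemma conn_of_forall_walk_to_s13 {α : Type*} {G : SimpleGraph α} {S : Finset α} (v : α)
    (h : ∀ a ∈ S, ∃ W : G.Walk a v, ∀ x ∈ W.support, x ∈ S) : Conn G S := by
  intro a ha b hb
  obtain ⟨Wa, hWa⟩ := h a ha
  obtain ⟨Wb, hWb⟩ := h b hb
  refine ⟨Wa.append Wb.reverse, fun x hx => ?_⟩
  rw [SimpleGraph.Walk.mem_support_append_iff, SimpleGraph.Walk.support_reverse,
    List.mem_reverse] at hx
  exact hx.elim (hWa x) (hWb x)

lemma Conn.insert_of_adj_s13 {α : Type*} [DecidableEq α] {G : SimpleGraph α} {C : Finset α}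
    (hC : Conn G C) {v w : α} (hv : v ∈ C) (hvw : G.Adj v w) : Conn G (insert w C) := by
  refine conn_of_forall_walk_to_s13 v fun a ha => ?_
  rcases mem_insert.1 ha with rfl | ha
  · exact ⟨.cons hvw.symm .nil, by simp [hv]⟩
  · obtain ⟨W, hW⟩ := hC a ha v hv
    exact ⟨W, fun x hx => mem_insert_of_mem (hW x hx)⟩

lemma IsMaxConnComp.spo_inter_subset {G : SimpleGraph V} [DecidableRel G.Adj] {C D : Finset V}
    (h : IsMaxConnComp G D C) : spo G C ∩ D ⊆ C := by
  obtain ⟨hCD, -, hconn, hmax⟩ := h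
  intro w hw
  obtain ⟨hw, hwD⟩ := mem_inter.1 hw
  by_contra hwC
  obtain ⟨v, hv, hvw⟩ := (mem_spo.1 hw).resolve_left hwC
  have := hmax (insert w C) (subset_insert w C) (insert_subset hwD hCD)
    (hconn.insert_of_adj_s13 hv hvw)
  exact hwC (this ▸ mem_insert_self w C)

lemma isMaxConnComp_of_spo_inter_subset {G : SimpleGraph V} [DecidableRel G.Adj]
    {C D : Finset V} (hC : C.Nonempty) (hconn : Conn G C) (hCD : C ⊆ D)
    (hspo : spo G C ∩ D ⊆ C) : IsMaxConnComp G D C := by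
  refine ⟨hCD, hC, hconn, fun C' hCC' hC'D hconn' => (Subset.antisymm ?_ hCC')⟩
  intro x hxC'
  by_contra hxC
  obtain ⟨c, hc⟩ := hC
  obtain ⟨W, hW⟩ := hconn' x hxC' c (hCC' hc)
  obtain ⟨d, hd, hfst, hsnd⟩ := W.exists_boundary_dart (↑C)ᶜ hxC (by simpa using hc)
  have hu : d.fst ∈ spo G C ∩ D :=
    mem_inter.2 ⟨mem_spo.2 (.inr ⟨d.snd, by simpa using hsnd, d.adj.symm⟩),
      hC'D (hW _ (W.dart_fst_mem_support_of_mem_darts hd))⟩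
  exact hfst (hspo hu)

/-- Lemma (expansion): for a nonempty connected set `C` and any `A ⊆ V`, there is a
set `B ⊇ A` having `C` among its inclusion-maximal connected subsets iff
`spo(C) ∩ (A ∖ C) = ∅`; i.e. `q_C` appears in the expansion of `p_A^V` iff
`spo(C) ∩ (A ∖ C) = ∅`. -/
theorem stmt13 (G : SimpleGraph V) [DecidableRel G.Adj] (C : Finset V)
    (hC : C.Nonempty) (hconn : Conn G C) (A : Finset V) :
    (∃ B : Finset V, A ⊆ B ∧ IsMaxConnComp G B C) ↔ spo G C ∩ (A \ C) = ∅ := by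
  constructor
  · rintro ⟨B, hAB, hB⟩
    refine eq_empty_of_forall_notMem fun w hw => ?_
    simp only [mem_inter, mem_sdiff] at hw
    exact hw.2.2 (hB.spo_inter_subset (mem_inter.2 ⟨hw.1, hAB hw.2.1⟩))
  · intro h
    refine ⟨A ∪ C, subset_union_left,
      isMaxConnComp_of_spo_inter_subset hC hconn subset_union_right fun w hw => ?_⟩
    by_contra hwC
    obtain ⟨hws, hwAC⟩ := mem_inter.1 hw
    have : w ∈ spo G C ∩ (A \ C) :=
      mem_inter.2 ⟨hws, mem_sdiff.2 ⟨(mem_union.1 hwAC).resolve_right hwC, hwC⟩⟩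
    simp [h] at this

end BMMI
end
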